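/- Let p : ℕ → ℝ be nonnegative with ∑'_{k} p k = 1, and let c₁, c₂ > 0 be constants such that p k ≤ c₂ · k^(−3/2) for every k ≥ 1. Fix n ≥ 1 and assume p n ≥ c₁ · n^(−3/2). Then (∑'_{k} min(k, n) · p k) / p n ≤ (4 · c₂ / c₁) · n². -/

import Mathlib

/-!
Bounding `p k` by `c₂ k^{-3/2}` reduces the numerator to `c₂ ∑_{k ≥ 1} min(k, n) k^{-3/2}`,
and this sum is at most `4 √n`: the part `k ≤ n` is `∑ k^{-1/2} ≤ 2 √n`, the tail is
`n ∑_{k > n} k^{-3/2} ≤ 2 n / √n`. Both estimates telescope through one potential, `2 √k` for `k ≤ n`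
and `4 √n - 2 n / √k` for `k ≥ n`.
Dividing by `p n ≥ c₁ n^{-3/2}` gives `4 (c₂ / c₁) √n · n^{3/2}`.
-/

open Real Finset

lemma rpow_neg_three_halves {x : ℝ} (hx : 0 ≤ x) : x ^ (-(3 / 2) : ℝ) = (x * √x)⁻¹ := by
  rw [rpow_neg hx, show (3 / 2 : ℝ) = 1 + 1 / 2 by norm_num, rpow_add' hx (by norm_num),
    rpow_one, ← sqrt_eq_rpow]

lemma sq_mul_rpow_neg_three_halves {x : ℝ} (hx : 0 ≤ x) :
    x ^ 2 * x ^ (-(3 / 2) : ℝ) = √x := by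
  rw [sqrt_eq_rpow, ← rpow_natCast, ← rpow_add' hx (by norm_num)]
  norm_num

lemma inv_sqrt_add_one_le {x : ℝ} (hx : 0 ≤ x) : (√(x + 1))⁻¹ ≤ 2 * (√(x + 1) - √x) := by
  have hb : 0 < √(x + 1) := sqrt_pos.mpr (by linarith)
  have hsq : √(x + 1) ^ 2 = √x ^ 2 + 1 := by rw [sq_sqrt hx, sq_sqrt (by linarith)]
  rw [inv_le_iff_one_le_mul₀' hb]
  nlinarith [sq_nonneg (√(x + 1) - √x)]

lemma inv_mul_sqrt_add_one_le {x : ℝ} (hx : 0 < x) :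
    ((x + 1) * √(x + 1))⁻¹ ≤ 2 * ((√x)⁻¹ - (√(x + 1))⁻¹) := by
  have ha : 0 < √x := sqrt_pos.mpr hx
  have hab : √x ≤ √(x + 1) := sqrt_le_sqrt (by linarith)
  have hsq : √(x + 1) ^ 2 = √x ^ 2 + 1 := by rw [sq_sqrt hx.le, sq_sqrt (by linarith)]
  rw [← sq_sqrt (show 0 ≤ x + 1 by linarith), sqrt_sq (sqrt_nonneg _)]
  generalize √x = a, √(x + 1) = b at *
  have hb : 0 < b := ha.trans_le hab
  rw [inv_sub_inv ha.ne' hb.ne', inv_le_iff_one_le_mul₀' (by positivity), mul_div_assoc',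
    mul_div_assoc', one_le_div (by positivity)]
  have key : a ≤ 2 * b ^ 2 * (b - a) := by
    nlinarith [mul_nonneg (sub_nonneg.mpr hab) (by nlinarith : 0 ≤ 2 * b ^ 2 - a * b - a ^ 2)]
  nlinarith [mul_le_mul_of_nonneg_left key hb.le]

noncomputable def sqrtPotential (n k : ℕ) : ℝ :=
  2 * √(min k n : ℕ) + 2 * √n - 2 * n / √(max k n : ℕ)

section sqrtPotential

variable {n : ℕ}

lemma sqrtPotential_of_le {k : ℕ} (hk : k ≤ n) : sqrtPotential n k = 2 * √k := by
  rw [sqrtPotential, min_eq_left hk, max_eq_right hk, mul_div_assoc, div_sqrt]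
  ring

lemma sqrtPotential_of_ge {k : ℕ} (hk : n ≤ k) :
    sqrtPotential n k = 4 * √n - 2 * n / √k := by
  rw [sqrtPotential, min_eq_right hk, max_eq_left hk]
  ring

lemma sqrtPotential_zero : sqrtPotential n 0 = 0 := by
  simp [sqrtPotential_of_le (Nat.zero_le n)]

lemma sqrtPotential_le (k : ℕ) : sqrtPotential n k ≤ 4 * √n := by
  have hmin : √(min k n : ℕ) ≤ √n := sqrt_le_sqrt (by exact_mod_cast min_le_right k n)
  have hdiv : 0 ≤ 2 * (n : ℝ) / √(max k n : ℕ) := by positivity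
  rw [sqrtPotential]
  linarith

lemma min_mul_rpow_le_sqrtPotential_sub (hn : 1 ≤ n) (k : ℕ) :
    ((min (k + 1) n : ℕ) : ℝ) * ((k + 1 : ℕ) : ℝ) ^ (-(3 / 2) : ℝ)
      ≤ sqrtPotential n (k + 1) - sqrtPotential n k := by
  rw [rpow_neg_three_halves (Nat.cast_nonneg _)]
  rcases lt_or_ge k n with hkn | hkn
  · rw [min_eq_left hkn, sqrtPotential_of_le hkn, sqrtPotential_of_le hkn.le, ← mul_sub]
    push_cast
    have hk1 : ((k : ℝ) + 1) * ((k + 1) * √(k + 1))⁻¹ = (√(k + 1))⁻¹ := by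
      have : (0 : ℝ) < k + 1 := by positivity
      field_simp
    rw [hk1]
    exact inv_sqrt_add_one_le (Nat.cast_nonneg k)
  · rw [min_eq_right (by omega), sqrtPotential_of_ge (by omega), sqrtPotential_of_ge hkn]
    have hk : (0 : ℝ) < k := by exact_mod_cast (show 0 < k by omega)
    push_cast
    calc (n : ℝ) * ((k + 1) * √(k + 1))⁻¹ ≤ n * (2 * ((√k)⁻¹ - (√(k + 1))⁻¹)) :=
          mul_le_mul_of_nonneg_left (inv_mul_sqrt_add_one_le hk) (Nat.cast_nonneg n)
      _ = _ := by ring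

lemma sum_min_mul_rpow_le (hn : 1 ≤ n) (s : Finset ℕ) :
    ∑ k ∈ s, ((min k n : ℕ) : ℝ) * (k : ℝ) ^ (-(3 / 2) : ℝ) ≤ 4 * √n := by
  set g : ℕ → ℝ := fun k ↦ ((min k n : ℕ) : ℝ) * (k : ℝ) ^ (-(3 / 2) : ℝ)
  set N := s.sup id
  calc ∑ k ∈ s, g k ≤ ∑ k ∈ range (N + 1), g k :=
        sum_le_sum_of_subset_of_nonneg s.subset_range_sup_succ fun _ _ _ ↦ by positivity
    _ = ∑ k ∈ range N, g (k + 1) := by simp [g, sum_range_succ']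
    _ ≤ ∑ k ∈ range N, (sqrtPotential n (k + 1) - sqrtPotential n k) :=
        sum_le_sum fun k _ ↦ min_mul_rpow_le_sqrtPotential_sub hn k
    _ = sqrtPotential n N := by rw [sum_range_sub, sqrtPotential_zero, sub_zero]
    _ ≤ 4 * √n := sqrtPotential_le N

end sqrtPotential

lemma tsum_min_mul_le_of_le_rpow {p : ℕ → ℝ} {c : ℝ} (hc : 0 ≤ c)
    (hp : ∀ k : ℕ, 1 ≤ k → p k ≤ c * (k : ℝ) ^ (-(3 / 2) : ℝ)) {n : ℕ} (hn : 1 ≤ n) :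
    ∑' k : ℕ, ((min k n : ℕ) : ℝ) * p k ≤ 4 * c * √n := by
  refine tsum_le_of_sum_le' (by positivity) fun s ↦ ?_
  calc ∑ k ∈ s, ((min k n : ℕ) : ℝ) * p k
      ≤ ∑ k ∈ s, c * (((min k n : ℕ) : ℝ) * (k : ℝ) ^ (-(3 / 2) : ℝ)) := by
        refine sum_le_sum fun k _ ↦ ?_
        rcases Nat.eq_zero_or_pos k with rfl | hk
        · simp
        · rw [mul_left_comm]
          exact mul_le_mul_of_nonneg_left (hp k hk) (Nat.cast_nonneg _)
    _ ≤ c * (4 * √n) := by rw [← mul_sum]; gcongr; exact sum_min_mul_rpow_le hn s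
    _ = 4 * c * √n := by ring

theorem stmt_12_general (p : ℕ → ℝ)
    (c₁ c₂ : ℝ) (hc₁ : 0 < c₁) (hc₂ : 0 < c₂)
    (hupper : ∀ k : ℕ, 1 ≤ k → p k ≤ c₂ * (k : ℝ) ^ (-(3 / 2) : ℝ))
    (n : ℕ) (hn : 1 ≤ n)
    (hlow : c₁ * (n : ℝ) ^ (-(3 / 2) : ℝ) ≤ p n) :
    (∑' k : ℕ, ((min k n : ℕ) : ℝ) * p k) / p n ≤ (4 * c₂ / c₁) * (n : ℝ) ^ 2 := by
  have hpn : 0 < p n := lt_of_lt_of_le (by positivity) hlow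
  rw [div_le_iff₀ hpn]
  calc ∑' k : ℕ, ((min k n : ℕ) : ℝ) * p k ≤ 4 * c₂ * √n :=
        tsum_min_mul_le_of_le_rpow hc₂.le hupper hn
    _ = 4 * c₂ / c₁ * (n : ℝ) ^ 2 * (c₁ * (n : ℝ) ^ (-(3 / 2) : ℝ)) := by
        rw [← sq_mul_rpow_neg_three_halves (Nat.cast_nonneg n)]
        field_simp
    _ ≤ 4 * c₂ / c₁ * (n : ℝ) ^ 2 * p n := by gcongr

/-- Quantitative exact-size sampling (Duchon et al.): if `p k ≤ c₂ k^{-3/2}`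
for all `k ≥ 1` and `p n ≥ c₁ n^{-3/2}`, then the expected total cost of the
exact-size rejection sampler, `(∑ min(k,n) p k) / p n`, is at most
`(4 c₂ / c₁) n²`. -/
theorem stmt_12 (p : ℕ → ℝ) (hnn : ∀ k, 0 ≤ p k) (hsum : ∑' k, p k = 1)
    (c₁ c₂ : ℝ) (hc₁ : 0 < c₁) (hc₂ : 0 < c₂)
    (hupper : ∀ k : ℕ, 1 ≤ k → p k ≤ c₂ * (k : ℝ) ^ (-(3 / 2) : ℝ))
    (n : ℕ) (hn : 1 ≤ n)
    (hlow : c₁ * (n : ℝ) ^ (-(3 / 2) : ℝ) ≤ p n) :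
    (∑' k : ℕ, ((min k n : ℕ) : ℝ) * p k) / p n ≤ (4 * c₂ / c₁) * (n : ℝ) ^ 2 :=
  stmt_12_general p c₁ c₂ hc₁ hc₂ hupper n hn hlow
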